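/- arXiv:quant-ph/0304124 — 3 statements merged into one kernel-verified Lean document; each statement's English description precedes it below -/
import Mathlib

section
/- Let ν > 0. Let A and B be independent real random variables, each distributed according to the normal distribution N(0, ν/2) with mean 0 and variance ν/2. Let Z be a random variable with values in the non-negative integers such that, conditionally on (A,B), Z is Poisson distributed with mean A² + B². Then Z is geometrically distributed with mean ν; that is, for every non-negative integer z, P(Z = z) = (1/(ν+1))·(ν/(ν+1))^z. -/
open MeasureTheory ProbabilityTheory Real Set
open scoped ENNReal NNReal

lemma polar_integral (c : ℝ) (hc : 0 < c) (z : ℕ) :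
    ∫ p : ℝ × ℝ, (p.1 ^ 2 + p.2 ^ 2) ^ z * Real.exp (-(c * (p.1 ^ 2 + p.2 ^ 2)))
      = π * z.factorial / c ^ (z + 1) := by
  rw [← integral_comp_polarCoord_symm]
  have htarget : polarCoord.target = Ioi (0:ℝ) ×ˢ Ioo (-π) π := rfl
  have h1 : (∫ p in polarCoord.target,
      p.1 • ((((polarCoord.symm p).1) ^ 2 + ((polarCoord.symm p).2) ^ 2) ^ z *
        Real.exp (-(c * (((polarCoord.symm p).1) ^ 2 + ((polarCoord.symm p).2) ^ 2)))))
      = ∫ p in polarCoord.target,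
        (p.1 * ((p.1 ^ 2) ^ z * Real.exp (-(c * p.1 ^ 2)))) * (1:ℝ) := by
    refine setIntegral_congr_fun (htarget ▸ (measurableSet_Ioi.prod measurableSet_Ioo)) ?_
    intro p _
    dsimp only
    have hps : ((polarCoord.symm p).1) ^ 2 + ((polarCoord.symm p).2) ^ 2 = p.1 ^ 2 := by
      simp only [polarCoord_symm_apply]
      have := Real.sin_sq_add_cos_sq p.2
      ring_nf
      nlinarith [Real.sin_sq_add_cos_sq p.2]
    rw [hps]; simp only [smul_eq_mul]; ring
  rw [h1, htarget, Measure.volume_eq_prod, setIntegral_prod_mul (fun r : ℝ => r * ((r ^ 2) ^ z * Real.exp (-(c * r ^ 2)))) (fun _ : ℝ => (1:ℝ))]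
  have h2 : (∫ x in Ioo (-π) π, (1:ℝ)) = 2 * π := by
    simp [Real.pi_pos.le, two_mul]
  have h3 : (∫ r in Ioi (0:ℝ), r * ((r ^ 2) ^ z * Real.exp (-(c * r ^ 2))))
      = c ^ (-((2 * (z:ℝ) + 1) + 1) / 2) * (1 / 2) * Real.Gamma (((2 * (z:ℝ) + 1) + 1) / 2) := by
    rw [← integral_rpow_mul_exp_neg_mul_rpow (by norm_num : (0:ℝ) < 2)
      (by nlinarith [(Nat.cast_nonneg z : (0:ℝ) ≤ z)] : (-1:ℝ) < 2 * (z:ℝ) + 1) hc]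
    refine setIntegral_congr_fun measurableSet_Ioi fun r hr => ?_
    have hr0 : (0:ℝ) < r := hr
    have : r ^ (2 * (z:ℝ) + 1) = r ^ (2 * z + 1 : ℕ) := by
      rw [← Real.rpow_natCast r (2 * z + 1)]; push_cast; ring_nf
    rw [this, Real.rpow_two]
    ring_nf
  rw [h3, h2]
  have e1 : ((2 * (z:ℝ) + 1) + 1) / 2 = (z:ℝ) + 1 := by ring
  have e2 : -((2 * (z:ℝ) + 1) + 1) / 2 = -((z:ℝ) + 1) := by ring
  rw [e1, e2]
  have e3 : Real.Gamma ((z:ℝ) + 1) = z.factorial := by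
    rw [← Real.Gamma_nat_eq_factorial]
  have e4 : c ^ (-((z:ℝ) + 1)) = (c ^ (z + 1 : ℕ))⁻¹ := by
    rw [Real.rpow_neg hc.le, ← Real.rpow_natCast c (z+1)]; push_cast; ring_nf
  rw [e3, e4]
  field_simp

lemma integrable_poly_exp (c : ℝ) (hc : 0 < c) (z : ℕ) :
    Integrable (fun p : ℝ × ℝ => (p.1 ^ 2 + p.2 ^ 2) ^ z *
      Real.exp (-(c * (p.1 ^ 2 + p.2 ^ 2)))) := by
  set M : ℝ := z.factorial * (2 / c) ^ z with hM
  have hMpos : 0 < M := by positivity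
  have hg : Integrable (fun p : ℝ × ℝ =>
      Real.exp (-(c/2) * p.1 ^ 2) * Real.exp (-(c/2) * p.2 ^ 2)) (volume.prod volume) :=
    (integrable_exp_neg_mul_sq (half_pos hc)).mul_prod (integrable_exp_neg_mul_sq (half_pos hc))
  rw [← Measure.volume_eq_prod] at hg
  have key : ∀ s : ℝ, 0 ≤ s → s ^ z * Real.exp (-(c * s)) ≤ M * Real.exp (-(c/2) * s) := by
    intro s hs
    have h1 : (c/2*s) ^ z / z.factorial ≤ Real.exp (c/2*s) :=
      Real.pow_div_factorial_le_exp _ (by positivity) z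
    rw [div_le_iff₀ (by positivity)] at h1
    have h3 : s ^ z ≤ M * Real.exp (c/2*s) := by
      have h2 : (c/2) ^ z * s ^ z ≤ Real.exp (c/2*s) * z.factorial := by
        calc (c/2) ^ z * s ^ z = (c/2*s) ^ z := (mul_pow _ _ _).symm
        _ ≤ _ := h1
      have hcz : (0:ℝ) < (c/2) ^ z := by positivity
      rw [hM]
      calc s ^ z = ((c/2) ^ z)⁻¹ * ((c/2) ^ z * s ^ z) := by field_simp
      _ ≤ ((c/2) ^ z)⁻¹ * (Real.exp (c/2*s) * z.factorial) := by gcongr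
      _ = ↑z.factorial * (2 / c) ^ z * Real.exp (c/2*s) := by
          rw [← inv_pow]; field_simp
    calc s ^ z * Real.exp (-(c * s)) ≤ (M * Real.exp (c/2*s)) * Real.exp (-(c * s)) := by
          gcongr
      _ = M * Real.exp (-(c/2) * s) := by
          rw [mul_assoc, ← Real.exp_add]; ring_nf
  refine (hg.const_mul M).mono' ?_ ?_
  · exact (Continuous.mul (by continuity) (by continuity)).aestronglyMeasurable
  · filter_upwards with p
    have hs : (0:ℝ) ≤ p.1 ^ 2 + p.2 ^ 2 := by positivity
    have := key _ hs
    rw [Real.norm_eq_abs, abs_of_nonneg (by positivity)]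
    calc (p.1 ^ 2 + p.2 ^ 2) ^ z * Real.exp (-(c * (p.1 ^ 2 + p.2 ^ 2)))
        ≤ M * Real.exp (-(c/2) * (p.1 ^ 2 + p.2 ^ 2)) := this
      _ = M * (Real.exp (-(c/2) * p.1 ^ 2) * Real.exp (-(c/2) * p.2 ^ 2)) := by
          rw [← Real.exp_add]; ring_nf

lemma lintegral_withDensity_prod (g : ℝ → ℝ≥0∞) (hg : Measurable g)
    (f : ℝ × ℝ → ℝ≥0∞) (hf : Measurable f) :
    ∫⁻ p, f p ∂((volume.withDensity g).prod (volume.withDensity g))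
      = ∫⁻ p, g p.1 * (g p.2 * f p) ∂(volume.prod volume) := by
  rw [lintegral_prod _ hf.aemeasurable]
  have h1 : ∀ x : ℝ, ∫⁻ y, f (x, y) ∂(volume.withDensity g)
      = ∫⁻ y, g y * f (x, y) := fun x => by
    rw [lintegral_withDensity_eq_lintegral_mul _ hg (g := fun y => f (x, y))
      (by exact hf.comp measurable_prodMk_left)]
    rfl
  simp_rw [h1]
  have h2 : Measurable fun x : ℝ => ∫⁻ y, g y * f (x, y) :=
    Measurable.lintegral_prod_right' (f := fun p : ℝ × ℝ => g p.2 * f p)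
      ((hg.comp measurable_snd).mul hf)
  rw [lintegral_withDensity_eq_lintegral_mul _ hg h2,
    lintegral_prod (fun p : ℝ × ℝ => g p.1 * (g p.2 * f p))
      (by exact ((hg.comp measurable_fst).mul
        ((hg.comp measurable_snd).mul hf)).aemeasurable)]
  refine lintegral_congr fun x => ?_
  simp only [Pi.mul_apply]
  rw [← lintegral_const_mul (g x) (f := fun y => g y * f (x, y))
    (by exact hg.mul (hf.comp measurable_prodMk_left))]



/-- If `A, B` are independent `N(0, ν/2)` random variables and, conditionally
on `(A, B)`, `Z` is Poisson with mean `A² + B²`, then `Z` is geometric with mean `ν`. -/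
theorem statement0
    {Ω : Type} [MeasureSpace Ω] [IsProbabilityMeasure (ℙ : Measure Ω)]
    (ν : ℝ) (hν : 0 < ν)
    (A B : Ω → ℝ) (Z : Ω → ℕ)
    (hA : Measurable A) (hB : Measurable B) (hZ : Measurable Z)
    (hABindep : IndepFun A B ℙ)
    (hlawA : (ℙ : Measure Ω).map A = gaussianReal 0 (Real.toNNReal (ν / 2)))
    (hlawB : (ℙ : Measure Ω).map B = gaussianReal 0 (Real.toNNReal (ν / 2)))
    (hcond : ∀ᵐ p ∂((ℙ : Measure Ω).map fun ω => (A ω, B ω)),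
      condDistrib Z (fun ω => (A ω, B ω)) ℙ p
        = poissonMeasure (Real.toNNReal (p.1 ^ 2 + p.2 ^ 2))) :
    ∀ z : ℕ, ℙ {ω | Z ω = z} = ENNReal.ofReal ((1 / (ν + 1)) * (ν / (ν + 1)) ^ z) := by
  intro z
  set W : Ω → ℝ × ℝ := fun ω => (A ω, B ω) with hWdef
  have hW : Measurable W := hA.prodMk hB
  -- step 1 : express as lintegral of the conditional kernel
  have step1 : ℙ {ω | Z ω = z}
      = ∫⁻ p, condDistrib Z W ℙ p {z} ∂((ℙ : Measure Ω).map W) := by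
    have hmapeq : ((ℙ : Measure Ω).map W) ⊗ₘ condDistrib Z W ℙ
        = (ℙ : Measure Ω).map (fun ω => (W ω, Z ω)) := by
      rw [condDistrib]
      nth_rewrite 1 [← Measure.fst_map_prodMk (X := W) hZ]
      exact ((ℙ : Measure Ω).map (fun ω => (W ω, Z ω))).disintegrate _
    have hset : {ω | Z ω = z} = (fun ω => (W ω, Z ω)) ⁻¹' (univ ×ˢ {z}) := by
      ext ω; simp [eq_comm]
    rw [hset, ← Measure.map_apply (hW.prodMk hZ) (MeasurableSet.univ.prod (measurableSet_singleton z)),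
      ← hmapeq, Measure.compProd_apply (MeasurableSet.univ.prod (measurableSet_singleton z))]
    congr 1 with p
    rw [Set.mk_preimage_prod_right (Set.mem_univ p)]
  rw [step1]
  -- step 2 : substitute the Poisson kernel
  have step2 : ∫⁻ p, condDistrib Z W ℙ p {z} ∂((ℙ : Measure Ω).map W)
      = ∫⁻ p, ENNReal.ofReal (poissonPMFReal (Real.toNNReal (p.1 ^ 2 + p.2 ^ 2)) z)
          ∂((ℙ : Measure Ω).map W) := by
    refine lintegral_congr_ae ?_
    filter_upwards [hcond] with p hp
    rw [hp]
    rw [poissonMeasure_singleton]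
    rfl
  rw [step2]
  -- step 3 : the law of W is the product of two gaussians
  set v : NNReal := Real.toNNReal (ν / 2) with hvdef
  have hv0 : v ≠ 0 := by
    simp only [hvdef, ne_eq, Real.toNNReal_eq_zero, not_le]
    positivity
  have hprod : (ℙ : Measure Ω).map W
      = (gaussianReal 0 v).prod (gaussianReal 0 v) := by
    rw [hWdef, (indepFun_iff_map_prod_eq_prod_map_map hA.aemeasurable hB.aemeasurable).mp
      hABindep, hlawA, hlawB]
  rw [hprod, gaussianReal_of_var_ne_zero 0 hv0]
  -- notation
  set c : ℝ := (ν + 1) / ν with hcdef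
  have hc : 0 < c := by positivity
  set k : ℝ := (π * ν)⁻¹ * ((z.factorial : ℝ))⁻¹ with hkdef
  set F : ℝ × ℝ → ℝ := fun p => Real.exp (-(p.1 ^ 2 + p.2 ^ 2)) * (p.1 ^ 2 + p.2 ^ 2) ^ z
    / (z.factorial : ℝ) with hFdef
  have hFval : ∀ p : ℝ × ℝ,
      poissonPMFReal (Real.toNNReal (p.1 ^ 2 + p.2 ^ 2)) z = F p := by
    intro p
    have hs : (0:ℝ) ≤ p.1 ^ 2 + p.2 ^ 2 := by positivity
    simp only [poissonPMFReal, hFdef, Real.coe_toNNReal _ hs]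
  have hFmeas : Measurable F := by
    apply Measurable.div _ measurable_const
    exact ((((measurable_fst.pow_const 2).add (measurable_snd.pow_const 2)).neg.exp).mul
      (((measurable_fst.pow_const 2).add (measurable_snd.pow_const 2)).pow_const z))
  have hFnn : ∀ p : ℝ × ℝ, 0 ≤ F p := by
    intro p
    have hs : (0:ℝ) ≤ p.1 ^ 2 + p.2 ^ 2 := by positivity
    simp only [hFdef]
    positivity
  simp only [hFval]
  -- step 4 : unfold the densities
  set g : ℝ → ℝ≥0∞ := gaussianPDF 0 v with hgdef
  have hgmeas : Measurable g := measurable_gaussianPDF 0 v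
  have hmeas2 : Measurable fun p : ℝ × ℝ => g p.1 * (g p.2 * ENNReal.ofReal (F p)) :=
    (hgmeas.comp measurable_fst).mul
      ((hgmeas.comp measurable_snd).mul hFmeas.ennreal_ofReal)
  have step4 : ∫⁻ p, ENNReal.ofReal (F p)
        ∂((volume.withDensity g).prod (volume.withDensity g))
      = ∫⁻ p : ℝ × ℝ, g p.1 * (g p.2 * ENNReal.ofReal (F p)) ∂volume := by
    rw [lintegral_withDensity_prod g hgmeas _ hFmeas.ennreal_ofReal, Measure.volume_eq_prod]
  rw [step4]
  -- step 5 : to a real integrand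
  set G : ℝ × ℝ → ℝ := fun p =>
    gaussianPDFReal 0 v p.1 * (gaussianPDFReal 0 v p.2 * F p) with hGdef
  have hGofReal : ∀ p : ℝ × ℝ, g p.1 * (g p.2 * ENNReal.ofReal (F p))
      = ENNReal.ofReal (G p) := by
    intro p
    simp only [hgdef, gaussianPDF, hGdef]
    rw [← ENNReal.ofReal_mul (gaussianPDFReal_nonneg 0 v p.2),
      ← ENNReal.ofReal_mul (gaussianPDFReal_nonneg 0 v p.1)]
  simp only [hGofReal]
  -- step 6 : pointwise identification with the polar integrand
  have hvcoe : (v : ℝ) = ν / 2 := Real.coe_toNNReal _ (by positivity)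
  have hGeq : G = fun p : ℝ × ℝ =>
      k * ((p.1 ^ 2 + p.2 ^ 2) ^ z * Real.exp (-(c * (p.1 ^ 2 + p.2 ^ 2)))) := by
    funext p
    simp only [hGdef, gaussianPDFReal, hFdef, hkdef, hcdef, sub_zero, hvcoe]
    have h2v : 2 * (ν / 2) = ν := by ring
    have hsqrt : (√(2 * π * (ν / 2)))⁻¹ * (√(2 * π * (ν / 2)))⁻¹ = (π * ν)⁻¹ := by
      rw [← mul_inv, Real.mul_self_sqrt (by positivity)]
      ring_nf
    have hexp : Real.exp (-p.1 ^ 2 / (2 * (ν / 2))) * (Real.exp (-p.2 ^ 2 / (2 * (ν / 2)))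
        * Real.exp (-(p.1 ^ 2 + p.2 ^ 2)))
        = Real.exp (-((ν + 1) / ν * (p.1 ^ 2 + p.2 ^ 2))) := by
      rw [← Real.exp_add, ← Real.exp_add]
      congr 1
      field_simp
      ring
    calc (√(2 * π * (ν / 2)))⁻¹ * Real.exp (-p.1 ^ 2 / (2 * (ν / 2))) *
          ((√(2 * π * (ν / 2)))⁻¹ * Real.exp (-p.2 ^ 2 / (2 * (ν / 2))) *
            (Real.exp (-(p.1 ^ 2 + p.2 ^ 2)) * (p.1 ^ 2 + p.2 ^ 2) ^ z / (z.factorial : ℝ)))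
        = ((√(2 * π * (ν / 2)))⁻¹ * (√(2 * π * (ν / 2)))⁻¹) * ((z.factorial : ℝ))⁻¹ *
          (p.1 ^ 2 + p.2 ^ 2) ^ z *
          (Real.exp (-p.1 ^ 2 / (2 * (ν / 2))) * (Real.exp (-p.2 ^ 2 / (2 * (ν / 2)))
            * Real.exp (-(p.1 ^ 2 + p.2 ^ 2)))) := by ring
      _ = _ := by rw [hsqrt, hexp]; ring
  -- step 7 : compute
  have hGint : Integrable G := by
    rw [hGeq]
    exact (integrable_poly_exp c hc z).const_mul k
  have hGnn : 0 ≤ᵐ[volume] G := by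
    filter_upwards with p
    simp only [hGdef]
    exact mul_nonneg (gaussianPDFReal_nonneg 0 v p.1)
      (mul_nonneg (gaussianPDFReal_nonneg 0 v p.2) (hFnn p))
  rw [← ofReal_integral_eq_lintegral_ofReal hGint hGnn]
  congr 1
  rw [hGeq]
  rw [integral_const_mul, polar_integral c hc z]
  -- final arithmetic
  have hfac : (0:ℝ) < z.factorial := by positivity
  have hν1 : (0:ℝ) < ν + 1 := by linarith
  rw [hkdef, hcdef, div_pow]
  rw [div_div_eq_mul_div]
  field_simp
  have h1 : (1 + ν)⁻¹ ^ z * (1 + ν) ^ z = 1 := by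
    rw [← mul_pow, inv_mul_cancel₀ (by linarith), one_pow]
  linear_combination (-(ν * ν ^ z + ν ^ 2 * ν ^ z)) * h1
end

section
/- Let n ≥ 2, θ ∈ ℝ and ν > 0. Let A_1, …, A_n be independent real random variables, each distributed N(θ, ν/2). For t = 1, …, n−1 let τ_t = arctan(t^{−1/2}), and apply successively, for t = 1, …, n−1, the update (A_1, A_{t+1}) ↦ (A_1 cos τ_t + A_{t+1} sin τ_t, −A_1 sin τ_t + A_{t+1} cos τ_t). Then the resulting random variables A'_1, …, A'_n are independent, with A'_1 distributed N(√n · θ, ν/2) and A'_j distributed N(0, ν/2) for every j = 2, …, n. -/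
open MeasureTheory ProbabilityTheory Real

/-- The rotation `g_τ^{(j,k)}` acting on a vector of amplitudes (0-based indices):
`(v j, v k) ↦ (v j cos τ + v k sin τ, -v j sin τ + v k cos τ)`. -/
noncomputable def rotStep (τ : ℝ) (j k : ℕ) (v : ℕ → ℝ) : ℕ → ℝ := fun i =>
  if i = j then v j * Real.cos τ + v k * Real.sin τ
  else if i = k then -v j * Real.sin τ + v k * Real.cos τ
  else v i

/-- The transformation `G₁ = g_{τ_{n-1}}^{(1,n)} ⋯ g_{τ_1}^{(1,2)}` with
`τ_t = arctan t^{-1/2}`, applied in the order `t = 1, …, n-1` (0-based indices: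
step `t` rotates the pair of indices `(0, t)`). -/
noncomputable def G1 (n : ℕ) (v : ℕ → ℝ) : ℕ → ℝ :=
  (List.range (n - 1)).foldl
    (fun (w : ℕ → ℝ) (t : ℕ) => rotStep (Real.arctan (1 / Real.sqrt ((t : ℝ) + 1))) 0 (t + 1) w) v

/-!
Every step of `G1` is a Givens rotation of two of the first `n` coordinates, hence a linear
isometry `O` of `ℝⁿ`. The product of the laws `N(m i, σ)` has characteristic function
`t ↦ exp (i ⟪t, m⟫ - σ ‖t‖² / 2)`, and pushing it forward by `O` only replaces `m` by `O m`.
So the `A'` are again independent Gaussians of variance `ν / 2`, whose means are obtained by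
applying `G1` to the constant vector `θ`. After `k` steps that vector is
`(√(k+1) θ, 0, …, 0, θ, …, θ)`: the angle `arctan (1 / √(k+1))` rotates `(√(k+1) θ, θ)`
onto `(√(k+2) θ, 0)`.
-/

open WithLp
open scoped NNReal RealInnerProductSpace

section Givens

variable {ι : Type*} [DecidableEq ι]

noncomputable def givens (τ : ℝ) (j k : ι) (x : ι → ℝ) : ι → ℝ := fun i =>
  if i = j then x j * cos τ + x k * sin τ
  else if i = k then -x j * sin τ + x k * cos τ
  else x i

lemma givens_add (τ : ℝ) (j k : ι) (x y : ι → ℝ) :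
    givens τ j k (x + y) = givens τ j k x + givens τ j k y := by
  ext i; simp only [givens, Pi.add_apply]; split_ifs <;> ring

lemma givens_smul (τ : ℝ) (j k : ι) (c : ℝ) (x : ι → ℝ) :
    givens τ j k (c • x) = c • givens τ j k x := by
  ext i; simp only [givens, Pi.smul_apply, smul_eq_mul]; split_ifs <;> ring

lemma givens_comp {κ : Type*} [DecidableEq κ] {e : κ → ι} (he : e.Injective)
    (τ : ℝ) (j k : κ) (x : ι → ℝ) :
    givens τ (e j) (e k) x ∘ e = givens τ j k (x ∘ e) := by
  ext i
  simp [givens, he.eq_iff]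

variable [Fintype ι]

lemma sum_sq_givens (τ : ℝ) {j k : ι} (hjk : j ≠ k) (x : ι → ℝ) :
    ∑ i, givens τ j k x i ^ 2 = ∑ i, x i ^ 2 := by
  rw [← sub_eq_zero, ← Finset.sum_sub_distrib,
    Finset.sum_eq_add j k hjk (fun i _ hi => by simp [givens, hi.1, hi.2]) (by simp) (by simp)]
  simp only [givens, ite_true, if_neg hjk.symm]
  linear_combination (x j ^ 2 + x k ^ 2) * sin_sq_add_cos_sq τ

noncomputable def givensRotation (τ : ℝ) {j k : ι} (hjk : j ≠ k) :
    EuclideanSpace ℝ ι ≃ₗᵢ[ℝ] EuclideanSpace ℝ ι :=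
  LinearIsometry.toLinearIsometryEquiv
    { toFun := fun x => toLp 2 (givens τ j k (ofLp x))
      map_add' := fun x y => by simp [givens_add]
      map_smul' := fun c x => by simp [givens_smul]
      norm_map' := fun x => by
        rw [← sq_eq_sq₀ (norm_nonneg _) (norm_nonneg _), EuclideanSpace.real_norm_sq_eq,
          EuclideanSpace.real_norm_sq_eq]
        exact sum_sq_givens τ hjk _ } rfl

lemma givensRotation_apply (τ : ℝ) {j k : ι} (hjk : j ≠ k) (x : EuclideanSpace ℝ ι) :
    givensRotation τ hjk x = toLp 2 (givens τ j k (ofLp x)) := rfl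

end Givens

section Gaussian

variable {ι : Type*} [Fintype ι]

lemma charFun_map_toLp_pi_gaussianReal (m : ι → ℝ) (v : ℝ≥0) (t : EuclideanSpace ℝ ι) :
    charFun ((Measure.pi fun i => gaussianReal (m i) v).map (toLp 2)) t
      = Complex.exp (⟪t, toLp 2 m⟫ * Complex.I - v * ‖t‖ ^ 2 / 2) := by
  rw [charFun_pi, ← Complex.ofReal_pow, EuclideanSpace.real_norm_sq_eq, PiLp.inner_apply]
  simp_rw [charFun_gaussianReal, ← Complex.exp_sum]
  push_cast
  rw [Finset.sum_sub_distrib, Finset.sum_mul, Finset.mul_sum, Finset.sum_div]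
  simp [mul_comm]

lemma charFun_map_linearIsometryEquiv {E : Type*} [NormedAddCommGroup E] [InnerProductSpace ℝ E]
    [MeasurableSpace E] [BorelSpace E] (μ : Measure E) (O : E ≃ₗᵢ[ℝ] E) (t : E) :
    charFun (μ.map O) t = charFun μ (O.symm t) := by
  rw [charFun_apply, charFun_apply, integral_map (by fun_prop) (by fun_prop)]
  simp_rw [LinearIsometryEquiv.inner_map_eq_flip]

lemma map_pi_gaussianReal_linearIsometryEquiv
    (O : EuclideanSpace ℝ ι ≃ₗᵢ[ℝ] EuclideanSpace ℝ ι) (m : ι → ℝ) (v : ℝ≥0) :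
    (Measure.pi fun i => gaussianReal (m i) v).map (fun x => ofLp (O (toLp 2 x)))
      = Measure.pi fun i => gaussianReal (O (toLp 2 m) i) v := by
  rw [← charFun_eq_pi_iff]
  intro t
  have hO : (toLp 2 ∘ fun x => ofLp (O (toLp 2 x))) = O ∘ toLp 2 := by ext; simp
  rw [Measure.map_map (by fun_prop) (by fun_prop), hO,
    ← Measure.map_map (by fun_prop) (by fun_prop), charFun_map_linearIsometryEquiv,
    charFun_map_toLp_pi_gaussianReal, ← charFun_pi, charFun_map_toLp_pi_gaussianReal]
  simp [LinearIsometryEquiv.inner_map_eq_flip]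

end Gaussian

lemma map_foldl_pi_gaussianReal {Ω α : Type*} [MeasurableSpace Ω] {P : Measure Ω} {n : ℕ}
    {f : (ℕ → ℝ) → α → ℕ → ℝ} {l : List α}
    (hf : ∀ a ∈ l, ∃ O : EuclideanSpace ℝ (Fin n) ≃ₗᵢ[ℝ] EuclideanSpace ℝ (Fin n),
      ∀ w, (fun i : Fin n => f w a i) = ofLp (O (toLp 2 fun i : Fin n => w i)))
    (v : ℝ≥0) {V : Ω → ℕ → ℝ} {m : ℕ → ℝ} (hV : Measurable fun ω (i : Fin n) => V ω i)
    (hlaw : P.map (fun ω (i : Fin n) => V ω i) = Measure.pi fun i : Fin n => gaussianReal (m i) v) :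
    P.map (fun ω (i : Fin n) => l.foldl f (V ω) i)
      = Measure.pi fun i : Fin n => gaussianReal (l.foldl f m i) v := by
  induction l generalizing V m with
  | nil => exact hlaw
  | cons a l ih =>
    obtain ⟨O, hO⟩ := hf a List.mem_cons_self
    have hstep : (fun ω (i : Fin n) => f (V ω) a i)
        = (fun x => ofLp (O (toLp 2 x))) ∘ fun ω (i : Fin n) => V ω i := by
      ext ω : 1; exact hO (V ω)
    refine ih (fun b hb => hf b (List.mem_cons_of_mem a hb)) ?_ ?_
    · rw [hstep]
      exact (by fun_prop : Measurable fun x => ofLp (O (toLp 2 x))).comp hV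
    · rw [hstep, ← Measure.map_map (by fun_prop) hV, hlaw,
        map_pi_gaussianReal_linearIsometryEquiv, ← hO m]

lemma iIndepFun_and_map_eq_of_map_fun_eq_pi {Ω ι : Type*} [MeasurableSpace Ω] [Fintype ι]
    {β : ι → Type*} [∀ i, MeasurableSpace (β i)] {P : Measure Ω} [IsProbabilityMeasure P]
    {X : ∀ i, Ω → β i} {μ : ∀ i, Measure (β i)} [∀ i, IsProbabilityMeasure (μ i)]
    (h : P.map (fun ω i => X i ω) = Measure.pi μ) :
    iIndepFun X P ∧ ∀ i, P.map (X i) = μ i := by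
  have hjoint : AEMeasurable (fun ω i => X i ω) P :=
    AEMeasurable.of_map_ne_zero (by rw [h]; exact IsProbabilityMeasure.ne_zero _)
  have hmarg (i : ι) : P.map (X i) = μ i := by
    rw [← (measurePreserving_eval μ i).map_eq, ← h,
      AEMeasurable.map_map_of_aemeasurable (measurable_pi_apply i).aemeasurable hjoint]
    rfl
  refine ⟨?_, hmarg⟩
  rw [iIndepFun_iff_map_fun_eq_pi_map (f := X) fun i =>
    (measurable_pi_apply i).comp_aemeasurable hjoint, h, funext hmarg]

lemma rotate_arctan_one_div {a : ℝ} (ha : 0 < a) :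
    a * cos (arctan (1 / a)) + sin (arctan (1 / a)) = √(a ^ 2 + 1)
      ∧ -a * sin (arctan (1 / a)) + cos (arctan (1 / a)) = 0 := by
  have hsq : √(1 + (1 / a) ^ 2) = √(a ^ 2 + 1) / a := by
    rw [show 1 + (1 / a) ^ 2 = (a ^ 2 + 1) / a ^ 2 by field_simp, sqrt_div' _ (by positivity),
      sqrt_sq ha.le]
  rw [cos_arctan, sin_arctan, hsq]
  constructor
  · field_simp
    rw [sq_sqrt (by positivity)]
  · field_simp
    ring

noncomputable def g1Step (w : ℕ → ℝ) (t : ℕ) : ℕ → ℝ :=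
  rotStep (arctan (1 / √((t : ℝ) + 1))) 0 (t + 1) w

lemma G1_eq_foldl_g1Step (n : ℕ) (v : ℕ → ℝ) :
    G1 n v = (List.range (n - 1)).foldl g1Step v := rfl

lemma exists_linearIsometryEquiv_g1Step {n t : ℕ} (ht : t + 1 < n) :
    ∃ O : EuclideanSpace ℝ (Fin n) ≃ₗᵢ[ℝ] EuclideanSpace ℝ (Fin n),
      ∀ w, (fun i : Fin n => g1Step w t i) = ofLp (O (toLp 2 fun i : Fin n => w i)) := by
  have hjk : (⟨0, by omega⟩ : Fin n) ≠ ⟨t + 1, ht⟩ := by simp [Fin.ext_iff]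
  refine ⟨givensRotation (arctan (1 / √((t : ℝ) + 1))) hjk, fun w => ?_⟩
  rw [givensRotation_apply]
  -- `rotStep` is literally `givens` on the index type `ℕ`
  exact givens_comp Fin.val_injective _ ⟨0, by omega⟩ ⟨t + 1, ht⟩ w

lemma foldl_g1Step_const (θ : ℝ) (k : ℕ) :
    (List.range k).foldl g1Step (fun _ => θ)
      = fun i => if i = 0 then √((k : ℝ) + 1) * θ else if i ≤ k then 0 else θ := by
  induction k with
  | zero => ext i; split_ifs <;> simp_all
  | succ k ih =>
    obtain ⟨hfirst, hsecond⟩ := rotate_arctan_one_div (a := √((k : ℝ) + 1)) (by positivity)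
    rw [sq_sqrt (by positivity)] at hfirst
    rw [List.range_succ, List.foldl_append, ih]
    ext i
    simp only [List.foldl_cons, List.foldl_nil, g1Step, rotStep]
    push_cast
    rcases Nat.lt_trichotomy i (k + 1) with hi | rfl | hi
    · rcases Nat.eq_zero_or_pos i with rfl | hi0
      · simp [-one_div]; linear_combination θ * hfirst
      · simp [hi0.ne', show i ≤ k by omega, show i ≠ k + 1 by omega, show i ≤ k + 1 by omega]
    · simp [-one_div]; linear_combination θ * hsecond
    · simp [show i ≠ 0 by omega, show ¬ i ≤ k by omega, show i ≠ k + 1 by omega,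
        show ¬ i ≤ k + 1 by omega]

theorem statement3_general
    {Ω : Type} [MeasureSpace Ω] [IsProbabilityMeasure (ℙ : Measure Ω)]
    (n : ℕ) (hn : 2 ≤ n) (θ ν : ℝ)
    (A : ℕ → Ω → ℝ) (hAmeas : ∀ i, Measurable (A i))
    (hindep : iIndepFun (fun i : Fin n => A i) ℙ)
    (hlaw : ∀ i < n, (ℙ : Measure Ω).map (A i) = gaussianReal θ (Real.toNNReal (ν / 2))) :
    iIndepFun
      (fun (i : Fin n) (ω : Ω) => G1 n (fun j => A j ω) i) ℙ
    ∧ (ℙ : Measure Ω).map (fun ω => G1 n (fun j => A j ω) 0)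
        = gaussianReal (Real.sqrt n * θ) (Real.toNNReal (ν / 2))
    ∧ ∀ i, 1 ≤ i → i < n →
        (ℙ : Measure Ω).map (fun ω => G1 n (fun j => A j ω) i)
          = gaussianReal 0 (Real.toNNReal (ν / 2)) := by
  simp only [G1_eq_foldl_g1Step]
  have hA : Measurable fun ω (i : Fin n) => A i ω := measurable_pi_lambda _ fun i => hAmeas i
  have hlawA : (ℙ : Measure Ω).map (fun ω (i : Fin n) => A i ω)
      = Measure.pi fun _ : Fin n => gaussianReal θ (ν / 2).toNNReal := by
    rw [(iIndepFun_iff_map_fun_eq_pi_map fun i : Fin n => (hAmeas i).aemeasurable).mp hindep]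
    exact congrArg Measure.pi (funext fun i => hlaw i i.isLt)
  have hlawG := map_foldl_pi_gaussianReal (l := List.range (n - 1)) (V := fun ω j => A j ω)
    (m := fun _ => θ)
    (fun t ht => exists_linearIsometryEquiv_g1Step (n := n) (t := t) (by simp at ht; omega))
    _ hA hlawA
  rw [foldl_g1Step_const, Nat.cast_sub (by omega), Nat.cast_one, sub_add_cancel] at hlawG
  obtain ⟨hindG, hmarg⟩ := iIndepFun_and_map_eq_of_map_fun_eq_pi hlawG
  refine ⟨hindG, (hmarg ⟨0, by omega⟩).trans (by simp), fun i hi hin => ?_⟩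
  exact (hmarg ⟨i, hin⟩).trans (by simp [show i ≠ 0 by omega, show i ≤ n - 1 by omega])

/-- applying `G₁` to `n` i.i.d. `N(θ, ν/2)` amplitudes yields independent
amplitudes, the first distributed `N(√n θ, ν/2)` and the others `N(0, ν/2)`. -/
theorem statement3
    {Ω : Type} [MeasureSpace Ω] [IsProbabilityMeasure (ℙ : Measure Ω)]
    (n : ℕ) (hn : 2 ≤ n) (θ ν : ℝ) (hν : 0 < ν)
    (A : ℕ → Ω → ℝ) (hAmeas : ∀ i, Measurable (A i))
    (hindep : iIndepFun (fun i : Fin n => A i) ℙ)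
    (hlaw : ∀ i < n, (ℙ : Measure Ω).map (A i) = gaussianReal θ (Real.toNNReal (ν / 2))) :
    iIndepFun
      (fun (i : Fin n) (ω : Ω) => G1 n (fun j => A j ω) i) ℙ
    ∧ (ℙ : Measure Ω).map (fun ω => G1 n (fun j => A j ω) 0)
        = gaussianReal (Real.sqrt n * θ) (Real.toNNReal (ν / 2))
    ∧ ∀ i, 1 ≤ i → i < n →
        (ℙ : Measure Ω).map (fun ω => G1 n (fun j => A j ω) i)
          = gaussianReal 0 (Real.toNNReal (ν / 2)) :=
  statement3_general n hn θ ν A hAmeas hindep hlaw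
end

section
/- Let θ, η ∈ ℝ and ν > 0 be fixed. For ε > 0 define M̂(ε) = ν² + ν + (2ν+1)(1 − 2^{−2ε})(θ² + η²) + ((3 + 2^{−8ε} − 4^{1−ε})/2)(θ⁴ + η⁴) and M̄ = (ν+1)². Then there exists ε₀ > 0 such that M̂(ε) < M̄ for all ε with 0 < ε < ε₀. -/
open Filter Set Topology

theorem ContinuousAt.exists_gt_forall_Ioo_lt {α β : Type*} [TopologicalSpace α] [LinearOrder α]
    [OrderTopology α] [NoMaxOrder α] [TopologicalSpace β] [LinearOrder β] [OrderClosedTopology β]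
    {f : α → β} {a : α} {c : β} (hf : ContinuousAt f a) (h : f a < c) :
    ∃ b > a, ∀ x ∈ Ioo a b, f x < c :=
  mem_nhdsGT_iff_exists_Ioo_subset.mp <|
    nhdsWithin_le_nhds (hf.eventually_lt continuousAt_const h)

/-- The paper's `M̂(ε)`. -/
noncomputable def hayashiScaleMSE (θ η ν ε : ℝ) : ℝ :=
  ν ^ 2 + ν + (2 * ν + 1) * (1 - (2 : ℝ) ^ (-(2 * ε))) * (θ ^ 2 + η ^ 2)
    + ((3 + (2 : ℝ) ^ (-(8 * ε)) - (4 : ℝ) ^ (1 - ε)) / 2) * (θ ^ 4 + η ^ 4)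

theorem continuous_hayashiScaleMSE (θ η ν : ℝ) : Continuous (hayashiScaleMSE θ η ν) := by
  unfold hayashiScaleMSE
  fun_prop (disch := norm_num)

theorem hayashiScaleMSE_zero (θ η ν : ℝ) : hayashiScaleMSE θ η ν 0 = ν ^ 2 + ν := by
  norm_num [hayashiScaleMSE]

theorem hayashiScaleMSE_zero_lt {ν : ℝ} (θ η : ℝ) (hν : 0 < ν) :
    hayashiScaleMSE θ η ν 0 < (ν + 1) ^ 2 := by
  rw [hayashiScaleMSE_zero]
  nlinarith

/-- for sufficiently small `ε > 0`, the mean square error `M̂(ε)` of the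
noisy Hayashi scale estimator (n = 2) is smaller than the mean square error
`M̄ = (ν+1)²` of the naive scale estimator. -/
theorem statement17 (θ η ν : ℝ) (hν : 0 < ν) :
    ∃ ε₀ > (0 : ℝ), ∀ ε : ℝ, 0 < ε → ε < ε₀ →
      ν ^ 2 + ν + (2 * ν + 1) * (1 - (2 : ℝ) ^ (-(2 * ε))) * (θ ^ 2 + η ^ 2)
          + ((3 + (2 : ℝ) ^ (-(8 * ε)) - (4 : ℝ) ^ (1 - ε)) / 2) * (θ ^ 4 + η ^ 4)
        < (ν + 1) ^ 2 := by
  obtain ⟨ε₀, hε₀, hlt⟩ := (continuous_hayashiScaleMSE θ η ν).continuousAt.exists_gt_forall_Ioo_lt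
    (hayashiScaleMSE_zero_lt θ η hν)
  exact ⟨ε₀, hε₀, fun ε hε hεε₀ => hlt ε ⟨hε, hεε₀⟩⟩
end
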